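/- The natural map F(L) → F(A) ≅ A/[A,A] sending the class of a⊗b (a, b ∈ L) to tr(ab) is injective, where F(L) = (L⊗L)/⟨a⊗b − b⊗a, a⊗[b,c] − [a,b]⊗c⟩. -/

import Mathlib

/-!
The inverse map is built from the noncommutative derivatives `∂_x, ∂_y` and the Dynkin map
`δ : A → L`, `δ(x_{i₁}⋯x_{iₙ}) = [x_{i₁},[…,[x_{iₙ₋₁},x_{iₙ}]]]`. Put
`β(a, c) = Σ_d [x_d ⊗ δ(Σ v c u)] ∈ F(L)`, where `∂_d a = Σ u ⊗ v`, and `σ(a) = β(a, 1)`.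
The Leibniz rule gives `σ(ab) = β(a, b) + β(b, a)`, so `σ` kills `[A,A]`. For Lie monomials
`a, b` of degrees `p, q`, induction on `a`, using `δ(b) = q b` and the two relations of `F(L)`,
gives `β(a, b) = p(p+q-1)[a ⊗ b]`, hence `σ(ab) = n(n-1)[a ⊗ b]` with `n = p + q ≥ 2`.
Since `[A,A]` is a graded subspace, an element of `L ⊗ L` whose product lies in `[A,A]` can be
treated one degree at a time, and in degree `n` the map `σ` recovers its class up to the
nonzero factor `n(n-1)`.
-/

noncomputable section
open TensorProduct

attribute [local instance 100] LieRing.ofAssociativeRing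

abbrev A : Type := FreeAlgebra ℝ (Fin 2)
abbrev B : Type := A ⊗[ℝ] A

def X : A := FreeAlgebra.ι ℝ 0
def Y : A := FreeAlgebra.ι ℝ 1

/-- Generator matrices used to define the noncommutative partial derivative `pd d`. -/
def genMat (d i : Fin 2) : Matrix (Fin 2) (Fin 2) B :=
  !![(Algebra.TensorProduct.includeLeft : A →ₐ[ℝ] B) (FreeAlgebra.ι ℝ i), if i = d then 1 else 0;
     0, Algebra.TensorProduct.includeRight (FreeAlgebra.ι ℝ i)]

def Φmat (d : Fin 2) : A →ₐ[ℝ] Matrix (Fin 2) (Fin 2) B :=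
  FreeAlgebra.lift ℝ (genMat d)

/-- The noncommutative partial derivative `∂_x` (for `d = 0`) resp. `∂_y` (for `d = 1`):
on a monomial it splits the word at each occurrence of the letter `d`. -/
def pd (d : Fin 2) (a : A) : B := Φmat d a 0 1

/-- The subspace `[A,A]` spanned by commutators; `tr(A) = A/[A,A]` is the trace space. -/
def commSub : Submodule ℝ A := Submodule.span ℝ {p : A | ∃ a b : A, p = a * b - b * a}

/-- The trace projection `tr : A → A/[A,A]`. -/
def trc (a : A) : A ⧸ commSub := Submodule.Quotient.mk a

/-- Reversed multiplication `μ_flip : A ⊗ A → A`, `b ⊗ c ↦ c·b`. -/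
def flipMul : B →ₗ[ℝ] A :=
  (LinearMap.mul' ℝ A).comp (TensorProduct.comm ℝ A A).toLinearMap

/-- The free Lie algebra `L ⊂ A`: the smallest Lie subalgebra of `A` (with bracket
`[a,b] = ab − ba`) containing `x` and `y`. -/
def L : LieSubalgebra ℝ A := LieSubalgebra.lieSpan ℝ A {X, Y}

/-- The relations defining `F(L) = (L ⊗ L)/⟨a⊗b − b⊗a, a⊗[b,c] − [a,b]⊗c⟩`. -/
def FLrel : Submodule ℝ (↥L ⊗[ℝ] ↥L) :=
  Submodule.span ℝ
    ({t | ∃ a b : ↥L, t = a ⊗ₜ[ℝ] b - b ⊗ₜ[ℝ] a} ∪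
     {t | ∃ a b c : ↥L, t = a ⊗ₜ[ℝ] ⁅b, c⁆ - ⁅a, b⁆ ⊗ₜ[ℝ] c})

/-- The natural map `L ⊗ L → F(A) = A/[A,A]`, `a ⊗ b ↦ tr(ab)`. -/
def toTrace : (↥L ⊗[ℝ] ↥L) →ₗ[ℝ] (A ⧸ commSub) :=
  commSub.mkQ.comp ((LinearMap.mul' ℝ A).comp
    (TensorProduct.map L.incl.toLinearMap L.incl.toLinearMap))

abbrev inclL : A →ₐ[ℝ] B := Algebra.TensorProduct.includeLeft
abbrev inclR : A →ₐ[ℝ] B := Algebra.TensorProduct.includeRight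

lemma Φmat_triangular (d : Fin 2) (a : A) :
    Φmat d a 0 0 = inclL a ∧ Φmat d a 1 0 = 0 ∧ Φmat d a 1 1 = inclR a := by
  induction a using FreeAlgebra.induction with
  | grade0 r => simp [AlgHom.commutes, Matrix.algebraMap_matrix_apply]
  | grade1 i => simp [Φmat, genMat]
  | mul a b ha hb => simp [Matrix.mul_apply, Fin.sum_univ_two, ha, hb]
  | add a b ha hb => simp [ha, hb, TensorProduct.add_tmul, TensorProduct.tmul_add]

lemma pd_mul (d : Fin 2) (a b : A) :
    pd d (a * b) = inclL a * pd d b + pd d a * inclR b := by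
  simp [pd, Matrix.mul_apply, Fin.sum_univ_two, (Φmat_triangular d a).1,
    (Φmat_triangular d b).2.2]

lemma pd_ι (d i : Fin 2) : pd d (FreeAlgebra.ι ℝ i) = if i = d then 1 else 0 := by
  simp [pd, Φmat, genMat]

def pdₗ (d : Fin 2) : A →ₗ[ℝ] B := Matrix.entryLinearMap ℝ B 0 1 ∘ₗ (Φmat d).toLinearMap

lemma pdₗ_apply (d : Fin 2) (a : A) : pdₗ d a = pd d a := rfl

lemma flipMul_includeLeft_mul (g : A) (t : B) : flipMul (inclL g * t) = flipMul (t * inclR g) := by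
  induction t using TensorProduct.induction_on with
  | zero => simp
  | tmul u v => simp [flipMul, Algebra.TensorProduct.tmul_mul_tmul, mul_assoc]
  | add x y hx hy => simp only [mul_add, add_mul, map_add, hx, hy]

def cyclicDeriv (d : Fin 2) : A →ₗ[ℝ] A →ₗ[ℝ] A :=
  ((LinearMap.mul ℝ B).compl₂ inclR.toLinearMap).compr₂ flipMul ∘ₗ pdₗ d

lemma cyclicDeriv_apply (d : Fin 2) (a c : A) :
    cyclicDeriv d a c = flipMul (pd d a * inclR c) := rfl

lemma cyclicDeriv_mul (d : Fin 2) (a b c : A) :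
    cyclicDeriv d (a * b) c = cyclicDeriv d a (b * c) + cyclicDeriv d b (c * a) := by
  simp only [cyclicDeriv_apply, pd_mul, add_mul, map_add, mul_assoc, ← map_mul,
    flipMul_includeLeft_mul]
  rw [add_comm]

lemma cyclicDeriv_ι (d i : Fin 2) (c : A) :
    cyclicDeriv d (FreeAlgebra.ι ℝ i) c = if i = d then c else 0 := by
  split_ifs <;> simp [cyclicDeriv_apply, pd_ι, *, flipMul, Algebra.TensorProduct.one_def]

abbrev counit : A →ₐ[ℝ] ℝ := FreeAlgebra.algebraMapInv

def counitRight : B →ₐ[ℝ] A :=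
  (Algebra.TensorProduct.rid ℝ ℝ A).toAlgHom.comp (Algebra.TensorProduct.map (AlgHom.id ℝ A) counit)

@[simp] lemma counitRight_tmul (a b : A) : counitRight (a ⊗ₜ b) = counit b • a := by
  simp [counitRight]

def XL (i : Fin 2) : L :=
  ⟨FreeAlgebra.ι ℝ i, LieSubalgebra.subset_lieSpan (by fin_cases i <;> simp [X, Y])⟩

@[simp] lemma coe_XL (i : Fin 2) : (XL i : A) = FreeAlgebra.ι ℝ i := rfl

def adL : A →ₐ[ℝ] Module.End ℝ L := FreeAlgebra.lift ℝ fun i => LieAlgebra.ad ℝ L (XL i)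

-- `counitRight ∘ pd d` is the right derivative `∂ʳ_d` (`a = counit a + Σ_d (∂ʳ_d a) x_d`),
-- so this is `δ a = Σ_d ad(∂ʳ_d a)(x_d)`.
def dynkin : A →ₗ[ℝ] L :=
  ∑ d : Fin 2, LinearMap.applyₗ (XL d) ∘ₗ adL.toLinearMap ∘ₗ counitRight.toLinearMap ∘ₗ pdₗ d

lemma dynkin_apply (a : A) : dynkin a = ∑ d : Fin 2, adL (counitRight (pd d a)) (XL d) := by
  simp [dynkin, pdₗ_apply]

lemma dynkin_ι (i : Fin 2) : dynkin (FreeAlgebra.ι ℝ i) = XL i := by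
  fin_cases i <;> simp [dynkin_apply, pd_ι]

lemma dynkin_mul (a b : A) : dynkin (a * b) = adL a (dynkin b) + counit b • dynkin a := by
  simp [dynkin_apply, pd_mul, Finset.sum_add_distrib]

lemma coe_lie (a b : L) : ((⁅a, b⁆ : L) : A) = a * b - b * a := by
  rw [LieSubalgebra.coe_bracket, Ring.lie_def]

inductive IsLieMonomial : ℕ → L → Prop
  | of (i : Fin 2) : IsLieMonomial 1 (XL i)
  | lie {p q : ℕ} {a b : L} : IsLieMonomial p a → IsLieMonomial q b → IsLieMonomial (p + q) ⁅a, b⁆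

namespace IsLieMonomial

variable {p : ℕ} {a : L}

lemma one_le (ha : IsLieMonomial p a) : 1 ≤ p := by
  induction ha <;> omega

lemma counit_eq_zero (ha : IsLieMonomial p a) : counit a = 0 := by
  induction ha with
  | of i => simp [FreeAlgebra.algebraMapInv]
  | lie _ _ iha ihb => rw [coe_lie]; simp [iha, ihb]

lemma adL_eq (ha : IsLieMonomial p a) : adL a = LieAlgebra.ad ℝ L a := by
  induction ha with
  | of i => simp [adL]
  | lie _ _ iha ihb => simp [iha, ihb, Ring.lie_def]

lemma dynkin_eq (ha : IsLieMonomial p a) : dynkin a = (p : ℝ) • a := by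
  induction ha with
  | of i => simp [dynkin_ι]
  | @lie p q a b ha hb iha ihb =>
    simp only [coe_lie, map_sub, dynkin_mul, iha, ihb, ha.counit_eq_zero, hb.counit_eq_zero,
      ha.adL_eq, hb.adL_eq, LieAlgebra.ad_apply, lie_smul, zero_smul, add_zero]
    rw [← lie_skew b]
    push_cast
    module

end IsLieMonomial

lemma span_isLieMonomial_eq_top : Submodule.span ℝ {a : L | ∃ p, IsLieMonomial p a} = ⊤ := by
  set N := Submodule.span ℝ {a : L | ∃ p, IsLieMonomial p a}
  have lie_mem {a b : L} (ha : a ∈ N) (hb : b ∈ N) : ⁅a, b⁆ ∈ N := by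
    let bracket : L →ₗ[ℝ] L →ₗ[ℝ] L := LieAlgebra.ad ℝ L
    have : Submodule.map₂ bracket N N ≤ N := by
      rw [Submodule.map₂_span_span, Submodule.span_le]
      rintro _ ⟨a, ⟨p, ha⟩, b, ⟨q, hb⟩, rfl⟩
      exact Submodule.subset_span ⟨p + q, ha.lie hb⟩
    exact this (Submodule.apply_mem_map₂ bracket ha hb)
  refine Submodule.eq_top_iff'.2 fun x => ?_
  obtain ⟨x, hx⟩ := x
  induction hx using LieSubalgebra.lieSpan_induction with
  | mem x hx =>
    rcases hx with rfl | rfl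
    exacts [Submodule.subset_span ⟨1, .of 0⟩, Submodule.subset_span ⟨1, .of 1⟩]
  | zero => exact N.zero_mem
  | add x y _ _ hx hy => exact N.add_mem hx hy
  | smul r x _ hx => exact N.smul_mem r hx
  | lie x y _ _ hx hy => exact lie_mem hx hy

def homogeneousTensors (n : ℕ) : Submodule ℝ (L ⊗[ℝ] L) :=
  Submodule.span ℝ
    {t | ∃ (p q : ℕ) (a b : L), IsLieMonomial p a ∧ IsLieMonomial q b ∧ p + q = n ∧ t = a ⊗ₜ b}

lemma iSup_homogeneousTensors : ⨆ n, homogeneousTensors n = ⊤ := by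
  rw [eq_top_iff, ← TensorProduct.map₂_mk_top_top_eq_top, ← span_isLieMonomial_eq_top,
    Submodule.map₂_span_span, Submodule.span_le]
  rintro _ ⟨a, ⟨p, ha⟩, b, ⟨q, hb⟩, rfl⟩
  exact Submodule.mem_iSup_of_mem (p + q) (Submodule.subset_span ⟨p, q, a, b, ha, hb, rfl, rfl⟩)

def mulL : L ⊗[ℝ] L →ₗ[ℝ] A :=
  LinearMap.mul' ℝ A ∘ₗ TensorProduct.map L.incl.toLinearMap L.incl.toLinearMap

@[simp] lemma mulL_tmul (a b : L) : mulL (a ⊗ₜ b) = a * b := rfl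

lemma toTrace_eq_mkQ_mulL (t : L ⊗[ℝ] L) : toTrace t = commSub.mkQ (mulL t) := rfl

lemma FLrel_le_ker_toTrace : FLrel ≤ LinearMap.ker toTrace := by
  rw [FLrel, Submodule.span_le]
  rintro _ (⟨a, b, rfl⟩ | ⟨a, b, c, rfl⟩) <;>
    rw [SetLike.mem_coe, LinearMap.mem_ker, map_sub, toTrace_eq_mkQ_mulL, toTrace_eq_mkQ_mulL,
      ← map_sub, Submodule.mkQ_apply, Submodule.Quotient.mk_eq_zero, mulL_tmul, mulL_tmul]
  · exact Submodule.subset_span ⟨a, b, rfl⟩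
  · have : (a : A) * ⁅b, c⁆ - ⁅a, b⁆ * c = b * (a * c) - a * c * b := by
      simp only [coe_lie]; noncomm_ring
    rw [this]
    exact Submodule.subset_span ⟨_, _, rfl⟩

open Polynomial in
theorem Polynomial.coeff_commutator_mem_span {R S : Type*} [CommRing R] [Ring S] [Algebra R S]
    (f g : S[X]) (n : ℕ) :
    (f * g - g * f).coeff n ∈ Submodule.span R {x : S | ∃ a b, x = a * b - b * a} := by
  rw [coeff_sub, coeff_mul, coeff_mul, ← Finset.Nat.sum_antidiagonal_swap, ← Finset.sum_sub_distrib]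
  exact Submodule.sum_mem _ fun x _ => Submodule.subset_span ⟨_, _, rfl⟩

-- `x_i ↦ x_i T`, so the coefficient of `Tⁿ` is the component of degree `n`.
def gradingHom : A →ₐ[ℝ] Polynomial A :=
  FreeAlgebra.lift ℝ fun i => Polynomial.monomial 1 (FreeAlgebra.ι ℝ i)

lemma coeff_gradingHom_mem_commSub {u : A} (hu : u ∈ commSub) (n : ℕ) :
    (gradingHom u).coeff n ∈ commSub := by
  induction hu using Submodule.span_induction with
  | mem x hx =>
    obtain ⟨a, b, rfl⟩ := hx
    rw [map_sub, map_mul, map_mul]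
    exact Polynomial.coeff_commutator_mem_span _ _ n
  | zero => simp
  | add x y _ _ hx hy => simpa using commSub.add_mem hx hy
  | smul r x _ hx => simpa using commSub.smul_mem r hx

lemma IsLieMonomial.gradingHom_eq {p : ℕ} {a : L} (ha : IsLieMonomial p a) :
    gradingHom a = Polynomial.monomial p (a : A) := by
  induction ha with
  | of i => simp [gradingHom]
  | @lie p q a b _ _ iha ihb =>
    rw [coe_lie]
    simp [iha, ihb, Polynomial.monomial_mul_monomial, add_comm q p]

lemma gradingHom_mulL {n : ℕ} {t : L ⊗[ℝ] L} (ht : t ∈ homogeneousTensors n) :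
    gradingHom (mulL t) = Polynomial.monomial n (mulL t) := by
  induction ht using Submodule.span_induction with
  | mem x hx =>
    obtain ⟨p, q, a, b, ha, hb, rfl, rfl⟩ := hx
    simp [ha.gradingHom_eq, hb.gradingHom_eq, Polynomial.monomial_mul_monomial]
  | zero => simp
  | add x y _ _ hx hy => simp [hx, hy]
  | smul r x _ hx => simp [hx]

lemma coeff_gradingHom_mulL_sum {f : ℕ →₀ L ⊗[ℝ] L} (hf : ∀ n, f n ∈ homogeneousTensors n)
    (n : ℕ) : (gradingHom (mulL (f.sum fun _ t => t))).coeff n = mulL (f n) := by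
  simp only [Finsupp.sum, map_sum, gradingHom_mulL (hf _), Polynomial.finsetSum_coeff,
    Polynomial.coeff_monomial]
  rw [Finset.sum_ite_eq']
  split_ifs with h
  · rfl
  · rw [Finsupp.notMem_support_iff.1 h, map_zero]

abbrev FL : Type := (L ⊗[ℝ] L) ⧸ FLrel

lemma mkQ_tmul_comm (a b : L) : FLrel.mkQ (a ⊗ₜ b) = FLrel.mkQ (b ⊗ₜ a) := by
  rw [← sub_eq_zero, ← map_sub, Submodule.mkQ_apply, Submodule.Quotient.mk_eq_zero]
  exact Submodule.subset_span (.inl ⟨a, b, rfl⟩)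

lemma mkQ_tmul_lie (a b c : L) : FLrel.mkQ (a ⊗ₜ ⁅b, c⁆) = FLrel.mkQ (⁅a, b⁆ ⊗ₜ c) := by
  rw [← sub_eq_zero, ← map_sub, Submodule.mkQ_apply, Submodule.Quotient.mk_eq_zero]
  exact Submodule.subset_span (.inr ⟨a, b, c, rfl⟩)

def pairing : A →ₗ[ℝ] A →ₗ[ℝ] FL :=
  ∑ d : Fin 2, (cyclicDeriv d).compr₂ (FLrel.mkQ ∘ₗ TensorProduct.mk ℝ L L (XL d) ∘ₗ dynkin)

lemma pairing_apply (a c : A) :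
    pairing a c = ∑ d : Fin 2, FLrel.mkQ (XL d ⊗ₜ dynkin (cyclicDeriv d a c)) := by
  simp [pairing]

lemma pairing_mul (a b c : A) : pairing (a * b) c = pairing a (b * c) + pairing b (c * a) := by
  simp only [pairing_apply, cyclicDeriv_mul, map_add, TensorProduct.tmul_add,
    Finset.sum_add_distrib]

lemma IsLieMonomial.pairing_eq {p q : ℕ} {a b : L} (ha : IsLieMonomial p a)
    (hb : IsLieMonomial q b) :
    pairing a b = ((p : ℝ) * (p + q - 1)) • FLrel.mkQ (a ⊗ₜ b) := by
  induction ha generalizing q b with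
  | of i =>
    fin_cases i <;> simp [pairing_apply, cyclicDeriv_ι, hb.dynkin_eq]
  | @lie p₁ p₂ a₁ a₂ ha₁ ha₂ ih₁ ih₂ =>
    have : pairing (⁅a₁, a₂⁆ : L) b = pairing a₁ (⁅a₂, b⁆ : L) - pairing a₂ (⁅a₁, b⁆ : L) := by
      simp only [coe_lie, map_sub, LinearMap.sub_apply, pairing_mul]
      abel
    rw [this, ih₁ (ha₂.lie hb), ih₂ (ha₁.lie hb), mkQ_tmul_lie, mkQ_tmul_lie, ← lie_skew a₁,
      TensorProduct.neg_tmul, map_neg]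
    push_cast
    module

def toFL : A →ₗ[ℝ] FL := pairing.flip 1

lemma toFL_mul (a b : A) : toFL (a * b) = pairing a b + pairing b a := by
  simp [toFL, pairing_mul]

lemma commSub_le_ker_toFL : commSub ≤ LinearMap.ker toFL := by
  rw [commSub, Submodule.span_le]
  rintro _ ⟨a, b, rfl⟩
  simp [toFL_mul, add_comm]

lemma IsLieMonomial.toFL_mul {p q : ℕ} {a b : L} (ha : IsLieMonomial p a)
    (hb : IsLieMonomial q b) :
    toFL (a * b) = (((p + q : ℕ) : ℝ) * ((p + q : ℕ) - 1)) • FLrel.mkQ (a ⊗ₜ b) := by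
  rw [_root_.toFL_mul, ha.pairing_eq hb, hb.pairing_eq ha, mkQ_tmul_comm b, ← add_smul]
  push_cast
  ring_nf

-- Homogeneous tensors have degree at least `2`, so the junk value `0⁻¹` never matters.
lemma mkQ_eq_smul_toFL_mulL {n : ℕ} {t : L ⊗[ℝ] L} (ht : t ∈ homogeneousTensors n) :
    FLrel.mkQ t = ((n : ℝ) * (n - 1))⁻¹ • toFL (mulL t) := by
  induction ht using Submodule.span_induction with
  | mem x hx =>
    obtain ⟨p, q, a, b, ha, hb, rfl, rfl⟩ := hx
    have : (2 : ℝ) ≤ (p + q : ℕ) := by exact_mod_cast Nat.add_le_add ha.one_le hb.one_le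
    rw [mulL_tmul, ha.toFL_mul hb, inv_smul_smul₀ (mul_ne_zero (by linarith) (by linarith))]
  | zero => simp
  | add x y _ _ hx hy => rw [map_add, hx, hy, map_add, map_add, smul_add]
  | smul r x _ hx => rw [map_smul, hx, map_smul, map_smul, smul_comm]

/-- The natural map `F(L) → F(A)`, `a ⊗ b ↦ tr(ab)`, is well defined and injective:
an element of `L ⊗ L` maps to `0` in `A/[A,A]` iff it lies in the subspace of
defining relations of `F(L)`. -/
theorem FL_to_FA_injective (t : ↥L ⊗[ℝ] ↥L) :
    toTrace t = 0 ↔ t ∈ FLrel := by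
  refine ⟨fun ht => ?_, fun ht => FLrel_le_ker_toTrace ht⟩
  have hmul : mulL t ∈ commSub := (Submodule.Quotient.mk_eq_zero _).1 ht
  obtain ⟨f, hf, rfl⟩ := (Submodule.mem_iSup_iff_exists_finsupp _ t).1
    (iSup_homogeneousTensors ▸ Submodule.mem_top)
  rw [← Submodule.Quotient.mk_eq_zero, ← Submodule.mkQ_apply, Finsupp.sum, map_sum]
  refine Finset.sum_eq_zero fun n _ => ?_
  rw [mkQ_eq_smul_toFL_mulL (hf n), ← coeff_gradingHom_mulL_sum hf n,
    commSub_le_ker_toFL (coeff_gradingHom_mem_commSub hmul n), smul_zero]
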